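/- For every k ≥ 1: the set of shapes {Sh(ρₖ(e_μ)) : μ ⊆ {1, …, 2k}} has exactly 2^k elements, and the assignment sending the mod-2ℤ[i] reduction of ρₖ(e_μ) to the pair (Sh(ρₖ(e_μ)), type of ρₖ(e_μ)) is a well-defined bijection from the 2^{k+1} distinct mod-2 reductions onto the product of the set of shapes with the two-element set {real, imaginary}. In particular, exactly 2^k of the equivalence classes of Clifford actions on the 2-torsion points consist of real-type matrices and exactly 2^k consist of imaginary-type matrices, and each shape occurs for exactly one real class and exactly one imaginary class. -/

import Mathlib

open Matrix

namespace DiracSpinor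

/-- The Gaussian integer `i`. -/
def gi : GaussianInt := ⟨0, 1⟩

/-- `E₁ = [[i,0],[0,−i]]`. -/
def E1 : Matrix (Fin 2) (Fin 2) GaussianInt := !![gi, 0; 0, -gi]

/-- `E₂ = [[0,i],[i,0]]`. -/
def E2 : Matrix (Fin 2) (Fin 2) GaussianInt := !![0, gi; gi, 0]

/-- `B = [[0,−i],[i,0]]`. -/
def Bm : Matrix (Fin 2) (Fin 2) GaussianInt := !![0, -gi; gi, 0]

/-- The 2×2 identity matrix. -/
def I2 : Matrix (Fin 2) (Fin 2) GaussianInt := 1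

/-- Kronecker product of square matrices, with the standard identification of the
index set `Fin m × Fin n` with `Fin (m*n)`. -/
def kron {m n : ℕ} (A : Matrix (Fin m) (Fin m) GaussianInt)
    (B : Matrix (Fin n) (Fin n) GaussianInt) :
    Matrix (Fin (m * n)) (Fin (m * n)) GaussianInt :=
  Matrix.reindex finProdFinEquiv finProdFinEquiv (Matrix.kroneckerMap (· * ·) A B)

/-- Iterated Kronecker power `A^{⊗t}`. -/
def kronPow (A : Matrix (Fin 2) (Fin 2) GaussianInt) :
    (t : ℕ) → Matrix (Fin (2 ^ t)) (Fin (2 ^ t)) GaussianInt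
  | 0 => 1
  | t + 1 => Matrix.reindex (finCongr (pow_succ 2 t).symm) (finCongr (pow_succ 2 t).symm)
      (kron (kronPow A t) A)

theorem sizeEq (k : ℕ) (i : Fin (2 * k)) :
    2 ^ (k - 1 - i.val / 2) * 2 * 2 ^ (i.val / 2) = 2 ^ k := by
  have h1 : i.val < 2 * k := i.isLt
  have h2 : (k - 1 - i.val / 2) + 1 + i.val / 2 = k := by omega
  calc 2 ^ (k - 1 - i.val / 2) * 2 * 2 ^ (i.val / 2)
      = 2 ^ ((k - 1 - i.val / 2) + 1 + i.val / 2) := by rw [pow_add, pow_add, pow_one]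
    _ = 2 ^ k := by rw [h2]

/-- `rhoVec k i` is `ρₖ(e_{i+1})`, the matrix representing the `(i+1)`-st vector generator
(`i : Fin (2*k)` is 0-based, so `i = 2j-2` encodes `e_{2j-1}` and `i = 2j-1` encodes `e_{2j}`):
`ρₖ(e_{2j−1}) = I₂^{⊗(k−j)} ⊗ E₁ ⊗ B^{⊗(j−1)}` and `ρₖ(e_{2j}) = I₂^{⊗(k−j)} ⊗ E₂ ⊗ B^{⊗(j−1)}`. -/
def rhoVec (k : ℕ) (i : Fin (2 * k)) : Matrix (Fin (2 ^ k)) (Fin (2 ^ k)) GaussianInt :=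
  Matrix.reindex (finCongr (sizeEq k i)) (finCongr (sizeEq k i))
    (kron (kron (kronPow I2 (k - 1 - i.val / 2)) (if i.val % 2 = 0 then E1 else E2))
      (kronPow Bm (i.val / 2)))

/-- `rho k μ` is `ρₖ(e_μ)`: the product of the `ρₖ(e_i)` for `i ∈ μ` taken in increasing order
(`μ : Finset (Fin (2*k))` is the 0-based version of a subset of `{1, …, 2k}`). -/
def rho (k : ℕ) (μ : Finset (Fin (2 * k))) : Matrix (Fin (2 ^ k)) (Fin (2 ^ k)) GaussianInt :=
  ((μ.sort (· ≤ ·)).map (rhoVec k)).prod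

/-- The quotient ring `ℤ[i]/2ℤ[i]`. -/
abbrev Rbar : Type := GaussianInt ⧸ Ideal.span ({2} : Set GaussianInt)

/-- Reduction `ℤ[i] → ℤ[i]/2ℤ[i]`. -/
def red : GaussianInt →+* Rbar := Ideal.Quotient.mk _

/-- `rhoBar k μ` is the entrywise reduction of `ρₖ(e_μ)` mod `2ℤ[i]`. -/
def rhoBar (k : ℕ) (μ : Finset (Fin (2 * k))) : Matrix (Fin (2 ^ k)) (Fin (2 ^ k)) Rbar :=
  (rho k μ).map red

/-- The shape of a matrix: the 0–1 matrix recording the positions of nonzero entries. -/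
def Sh {n : ℕ} (M : Matrix (Fin n) (Fin n) GaussianInt) : Matrix (Fin n) (Fin n) GaussianInt :=
  Matrix.of fun r s => if M r s = 0 then 0 else 1

/-- A matrix has real type if all its nonzero entries lie in `{1, −1}`. -/
def RealType {n : ℕ} (M : Matrix (Fin n) (Fin n) GaussianInt) : Prop :=
  ∀ r s, M r s ≠ 0 → M r s = 1 ∨ M r s = -1

/-- A matrix has imaginary type if all its nonzero entries lie in `{i, −i}`. -/
def ImagType {n : ℕ} (M : Matrix (Fin n) (Fin n) GaussianInt) : Prop :=
  ∀ r s, M r s ≠ 0 → M r s = gi ∨ M r s = -gi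


-- ### auxiliary development
def uset : Bool → Set GaussianInt := fun b => if b then {gi, -gi} else {1, -1}

lemma uset_ne_zero {b : Bool} {x : GaussianInt} (h : x ∈ uset b) : x ≠ 0 := by
  cases b <;> simp only [uset, if_true, if_false, Set.mem_insert_iff, Set.mem_singleton_iff] at h <;>
    rcases h with h | h <;> subst h <;> decide

lemma uset_mul {b c : Bool} {x y : GaussianInt} (hx : x ∈ uset b) (hy : y ∈ uset c) :
    x * y ∈ uset (xor b c) := by
  cases b <;> cases c <;>
    simp only [uset, if_true, if_false, Set.mem_insert_iff, Set.mem_singleton_iff,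
      Bool.xor_false, Bool.xor_true, Bool.false_xor, Bool.true_xor, Bool.not_true,
      Bool.not_false] at hx hy ⊢ <;>
    rcases hx with hx | hx <;> rcases hy with hy | hy <;> subst hx <;> subst hy <;>
    first
      | exact Or.inl (by decide)
      | exact Or.inr (by decide)

def Mono {n : ℕ} (v : ℕ) (b : Bool) (M : Matrix (Fin n) (Fin n) GaussianInt) : Prop :=
  ∀ r c : Fin n, ((c : ℕ) = (r : ℕ) ^^^ v → M r c ∈ uset b) ∧
    ((c : ℕ) ≠ (r : ℕ) ^^^ v → M r c = 0)

lemma mono_one (n : ℕ) : Mono 0 false (1 : Matrix (Fin n) (Fin n) GaussianInt) := by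
  intro r c
  constructor
  · intro h
    have : c = r := Fin.ext (by simpa using h)
    subst this
    simp [Matrix.one_apply, uset]
  · intro h
    have : c ≠ r := fun hc => h (by simp [hc])
    simp [Matrix.one_apply_ne' this]

lemma mono_mul {k : ℕ} {v w : ℕ} {b c : Bool}
    {M N : Matrix (Fin (2 ^ k)) (Fin (2 ^ k)) GaussianInt}
    (hv : v < 2 ^ k) (hM : Mono v b M) (hN : Mono w c N) :
    Mono (v ^^^ w) (xor b c) (M * N) := by
  intro r s
  have htlt : (r : ℕ) ^^^ v < 2 ^ k := Nat.xor_lt_two_pow r.isLt hv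
  set t0 : Fin (2 ^ k) := ⟨(r : ℕ) ^^^ v, htlt⟩ with ht0
  have hsum : (M * N) r s = M r t0 * N t0 s := by
    rw [Matrix.mul_apply]
    apply Finset.sum_eq_single t0
    · intro t _ hne
      have : (t : ℕ) ≠ (r : ℕ) ^^^ v := fun hc => hne (Fin.ext hc)
      rw [(hM r t).2 this, zero_mul]
    · intro h; exact absurd (Finset.mem_univ t0) h
  constructor
  · intro hcond
    rw [hsum]
    have h1 : M r t0 ∈ uset b := (hM r t0).1 rfl
    have h2 : N t0 s ∈ uset c := (hN t0 s).1 (by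
      show (s : ℕ) = ((r : ℕ) ^^^ v) ^^^ w
      rw [Nat.xor_assoc]; exact hcond)
    exact uset_mul h1 h2
  · intro hcond
    rw [hsum]
    have : (s : ℕ) ≠ ((r : ℕ) ^^^ v) ^^^ w := by rw [Nat.xor_assoc]; exact hcond
    rw [(hN t0 s).2 this, mul_zero]

lemma xor_split {q : ℕ} (a b x y : ℕ) (hx : x < 2 ^ q) (hy : y < 2 ^ q) :
    (2 ^ q * a + x) ^^^ (2 ^ q * b + y) = 2 ^ q * (a ^^^ b) + (x ^^^ y) := by
  have hxy : x ^^^ y < 2 ^ q := Nat.xor_lt_two_pow hx hy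
  apply Nat.eq_of_testBit_eq
  intro j
  rw [Nat.testBit_xor, Nat.testBit_two_pow_mul_add a hx j, Nat.testBit_two_pow_mul_add b hy j,
    Nat.testBit_two_pow_mul_add (a ^^^ b) hxy j]
  by_cases h : j < q <;> simp [h, Nat.testBit_xor]

lemma kron_apply {m n : ℕ} (A : Matrix (Fin m) (Fin m) GaussianInt)
    (B : Matrix (Fin n) (Fin n) GaussianInt) (r c : Fin (m * n)) :
    kron A B r c = A r.divNat c.divNat * B r.modNat c.modNat := rfl

lemma mono_kron {m q : ℕ} {v w : ℕ} {b c : Bool} {n : ℕ} (hn : n = 2 ^ q)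
    {A : Matrix (Fin m) (Fin m) GaussianInt} {B : Matrix (Fin n) (Fin n) GaussianInt}
    (hw : w < 2 ^ q) (hA : Mono v b A) (hB : Mono w c B) :
    Mono (2 ^ q * v + w) (xor b c) (kron A B) := by
  subst hn
  intro r s
  have decomp : ∀ x : Fin (m * 2 ^ q), (x : ℕ) = 2 ^ q * (x.divNat : ℕ) + (x.modNat : ℕ) := by
    intro x
    rw [Fin.coe_divNat, Fin.coe_modNat]
    exact (Nat.div_add_mod (x : ℕ) (2 ^ q)).symm
  have hxor : (r : ℕ) ^^^ (2 ^ q * v + w) =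
      2 ^ q * ((r.divNat : ℕ) ^^^ v) + ((r.modNat : ℕ) ^^^ w) := by
    conv_lhs => rw [decomp r]
    exact xor_split _ _ _ _ r.modNat.isLt hw
  have key : ((s : ℕ) = (r : ℕ) ^^^ (2 ^ q * v + w)) ↔
      ((s.divNat : ℕ) = (r.divNat : ℕ) ^^^ v ∧ (s.modNat : ℕ) = (r.modNat : ℕ) ^^^ w) := by
    rw [hxor]
    constructor
    · intro h
      have hY : (r.modNat : ℕ) ^^^ w < 2 ^ q := Nat.xor_lt_two_pow r.modNat.isLt hw
      have hpos : 0 < 2 ^ q := Nat.two_pow_pos q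
      constructor
      · rw [Fin.coe_divNat, h, Nat.mul_add_div hpos, Nat.div_eq_of_lt hY, add_zero]
      · rw [Fin.coe_modNat, h, Nat.mul_add_mod, Nat.mod_eq_of_lt hY]
    · rintro ⟨h1, h2⟩
      rw [decomp s, h1, h2]
  constructor
  · intro h
    obtain ⟨h1, h2⟩ := key.mp h
    rw [kron_apply]
    exact uset_mul ((hA _ _).1 h1) ((hB _ _).1 h2)
  · intro h
    rw [kron_apply]
    by_cases hd : (s.divNat : ℕ) = (r.divNat : ℕ) ^^^ v
    · have hm : (s.modNat : ℕ) ≠ (r.modNat : ℕ) ^^^ w := fun hm => h (key.mpr ⟨hd, hm⟩)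
      rw [(hB _ _).2 hm, mul_zero]
    · rw [(hA _ _).2 hd, zero_mul]

-- base matrices
lemma mono_E1 : Mono 0 true E1 := by
  intro r c
  fin_cases r <;> fin_cases c <;>
    constructor <;> intro h <;>
    simp_all [E1, uset, Matrix.cons_val_zero, Matrix.cons_val_one] <;> decide

lemma mono_E2 : Mono 1 true E2 := by
  intro r c
  fin_cases r <;> fin_cases c <;>
    constructor <;> intro h <;>
    simp_all [E2, uset, Matrix.cons_val_zero, Matrix.cons_val_one] <;> decide

lemma mono_Bm : Mono 1 true Bm := by
  intro r c
  fin_cases r <;> fin_cases c <;>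
    constructor <;> intro h <;>
    simp_all [Bm, uset, Matrix.cons_val_zero, Matrix.cons_val_one] <;> decide

lemma mono_I2 : Mono 0 false I2 := mono_one 2

lemma mono_cast {n n' : ℕ} (h : n = n') {v : ℕ} {b : Bool}
    {M : Matrix (Fin n) (Fin n) GaussianInt} (hM : Mono v b M) :
    Mono v b (Matrix.reindex (finCongr h) (finCongr h) M) := by
  subst h
  intro r c
  have := hM r c
  simpa using this

lemma mono_congr {n : ℕ} {v v' : ℕ} {b b' : Bool} {M : Matrix (Fin n) (Fin n) GaussianInt}
    (hv : v = v') (hb : b = b') (hM : Mono v b M) : Mono v' b' M := by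
  subst hv; subst hb; exact hM

lemma mono_kronPow_I2 (t : ℕ) : Mono 0 false (kronPow I2 t) := by
  induction t with
  | zero => exact mono_one 1
  | succ t ih =>
    show Mono 0 false (Matrix.reindex _ _ (kron (kronPow I2 t) I2))
    exact mono_cast _ (mono_congr (by norm_num) rfl
      (mono_kron (q := 1) (by norm_num) (by norm_num) ih mono_I2))

lemma mono_kronPow_Bm (t : ℕ) : Mono (2 ^ t - 1) (decide (t % 2 = 1)) (kronPow Bm t) := by
  induction t with
  | zero => exact mono_congr rfl (by decide) (mono_one 1)
  | succ t ih =>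
    have h1 : 1 ≤ 2 ^ t := Nat.one_le_two_pow
    show Mono _ _ (Matrix.reindex _ _ (kron (kronPow Bm t) Bm))
    refine mono_cast _ (mono_congr ?_ ?_ (mono_kron (q := 1) (by norm_num) (by norm_num) ih mono_Bm))
    · rw [pow_succ]; omega
    · rcases Nat.even_or_odd t with h | h
      · have : t % 2 = 0 := Nat.even_iff.mp h
        simp [this, Nat.succ_mod_two_eq_one_iff.mpr this]
      · have : t % 2 = 1 := Nat.odd_iff.mp h
        simp [this, Nat.succ_mod_two_eq_zero_iff.mpr this]

def vi (k : ℕ) (i : Fin (2 * k)) : ℕ := 2 ^ (i.val / 2 + i.val % 2) - 1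

def bi (k : ℕ) (i : Fin (2 * k)) : Bool := decide (i.val / 2 % 2 = 0)

lemma vi_lt (k : ℕ) (i : Fin (2 * k)) : vi k i < 2 ^ k := by
  have h1 : i.val < 2 * k := i.isLt
  have h2 : i.val / 2 + i.val % 2 ≤ k := by omega
  have h3 : 2 ^ (i.val / 2 + i.val % 2) ≤ 2 ^ k := Nat.pow_le_pow_right (by norm_num) h2
  have h4 : 1 ≤ 2 ^ (i.val / 2 + i.val % 2) := Nat.one_le_two_pow
  unfold vi
  omega

lemma mono_rhoVec (k : ℕ) (i : Fin (2 * k)) : Mono (vi k i) (bi k i) (rhoVec k i) := by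
  unfold rhoVec
  apply mono_cast
  set t := i.val / 2 with ht
  have hB := mono_kronPow_Bm t
  have hI := mono_kronPow_I2 (k - 1 - t)
  by_cases h : i.val % 2 = 0
  · rw [if_pos h]
    have inner := mono_kron (q := 1) (n := 2) (by norm_num) (by norm_num) hI mono_E1
    have outer := mono_kron (q := t) rfl (by have : 1 ≤ 2^t := Nat.one_le_two_pow; omega) inner hB
    refine mono_congr ?_ ?_ outer
    · unfold vi; rw [← ht, h]; simp
    · unfold bi; rw [← ht]
      rcases Nat.even_or_odd t with h2 | h2
      · have : t % 2 = 0 := Nat.even_iff.mp h2; simp [this]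
      · have : t % 2 = 1 := Nat.odd_iff.mp h2; simp [this]
  · rw [if_neg h]
    have h1 : i.val % 2 = 1 := Nat.mod_two_ne_zero.mp h
    have inner := mono_kron (q := 1) (n := 2) (by norm_num) (by norm_num) hI mono_E2
    have outer := mono_kron (q := t) rfl (by have : 1 ≤ 2^t := Nat.one_le_two_pow; omega) inner hB
    refine mono_congr ?_ ?_ outer
    · unfold vi; rw [← ht, h1]
      have h5 : 1 ≤ 2 ^ t := Nat.one_le_two_pow
      simp only [mul_zero, zero_add, mul_one, pow_succ]
      omega
    · unfold bi; rw [← ht]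
      rcases Nat.even_or_odd t with h2 | h2
      · have : t % 2 = 0 := Nat.even_iff.mp h2; simp [this]
      · have : t % 2 = 1 := Nat.odd_iff.mp h2; simp [this]

def VL (k : ℕ) (l : List (Fin (2 * k))) : ℕ := l.foldr (fun i acc => vi k i ^^^ acc) 0

def BL (k : ℕ) (l : List (Fin (2 * k))) : Bool := l.foldr (fun i acc => xor (bi k i) acc) false

lemma VL_lt (k : ℕ) (l : List (Fin (2 * k))) : VL k l < 2 ^ k := by
  induction l with
  | nil => exact Nat.two_pow_pos k
  | cons a l ih => exact Nat.xor_lt_two_pow (vi_lt k a) ih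

lemma mono_list (k : ℕ) (l : List (Fin (2 * k))) :
    Mono (VL k l) (BL k l) ((l.map (rhoVec k)).prod) := by
  induction l with
  | nil => exact mono_one _
  | cons a l ih =>
    show Mono _ _ (rhoVec k a * (l.map (rhoVec k)).prod)
    exact mono_mul (vi_lt k a) (mono_rhoVec k a) ih

def Vf (k : ℕ) (μ : Finset (Fin (2 * k))) : ℕ := VL k (μ.sort (· ≤ ·))

def Bf (k : ℕ) (μ : Finset (Fin (2 * k))) : Bool := BL k (μ.sort (· ≤ ·))

lemma mono_rho (k : ℕ) (μ : Finset (Fin (2 * k))) : Mono (Vf k μ) (Bf k μ) (rho k μ) :=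
  mono_list k _

lemma Vf_lt (k : ℕ) (μ : Finset (Fin (2 * k))) : Vf k μ < 2 ^ k := VL_lt k _

instance : Std.Commutative (α := Bool) (· != ·) := ⟨fun a b => Bool.xor_comm a b⟩

lemma finset_fold_eq {α β : Type*} (op : β → β → β) [Std.Commutative op] [Std.Associative op]
    (b : β) (f : α → β) (s : Finset α) :
    s.fold op b f = Multiset.fold op b (Multiset.map f s.1) := rfl

lemma Vf_eq_fold (k : ℕ) (μ : Finset (Fin (2 * k))) :
    Vf k μ = μ.fold (fun a b : ℕ => a ^^^ b) 0 (vi k) := by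
  rw [finset_fold_eq, ← Finset.sort_eq μ (· ≤ ·)]
  rw [show Multiset.map (vi k) ↑(μ.sort (· ≤ ·)) = ↑((μ.sort (· ≤ ·)).map (vi k)) from rfl,
    Multiset.coe_fold_r, List.foldr_map]
  rfl

lemma Bf_eq_fold (k : ℕ) (μ : Finset (Fin (2 * k))) :
    Bf k μ = μ.fold (fun a b : Bool => a != b) false (bi k) := by
  rw [finset_fold_eq, ← Finset.sort_eq μ (· ≤ ·)]
  rw [show Multiset.map (bi k) ↑(μ.sort (· ≤ ·)) = ↑((μ.sort (· ≤ ·)).map (bi k)) from rfl,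
    Multiset.coe_fold_r, List.foldr_map]
  rfl

lemma Vf_flip (k : ℕ) (a : Fin (2 * k)) (μ : Finset (Fin (2 * k))) :
    ∃ η : Finset (Fin (2 * k)), Vf k η = vi k a ^^^ Vf k μ ∧ Bf k η = xor (bi k a) (Bf k μ) := by
  by_cases h : a ∈ μ
  · refine ⟨μ.erase a, ?_, ?_⟩
    · have he : μ = insert a (μ.erase a) := (Finset.insert_erase h).symm
      rw [Vf_eq_fold, Vf_eq_fold]
      conv_rhs => rw [he, Finset.fold_insert (Finset.notMem_erase a μ)]
      rw [← Nat.xor_assoc, Nat.xor_self, Nat.zero_xor]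
    · have he : μ = insert a (μ.erase a) := (Finset.insert_erase h).symm
      rw [Bf_eq_fold, Bf_eq_fold]
      conv_rhs => rw [he, Finset.fold_insert (Finset.notMem_erase a μ)]
      generalize Finset.fold (fun a b : Bool => a != b) false (bi k) (μ.erase a) = z
      revert z
      cases bi k a <;> decide
  · refine ⟨insert a μ, ?_, ?_⟩
    · rw [Vf_eq_fold, Vf_eq_fold, Finset.fold_insert h]
    · rw [Bf_eq_fold, Bf_eq_fold, Finset.fold_insert h]

lemma pow_add_eq_xor {j r : ℕ} (hr : r < 2 ^ j) : 2 ^ j ^^^ r = 2 ^ j + r := by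
  apply Nat.eq_of_testBit_eq
  intro i
  rw [show 2 ^ j + r = 2 ^ j * 1 + r by ring, Nat.testBit_xor,
    Nat.testBit_two_pow_mul_add 1 hr i]
  rcases lt_trichotomy i j with h | h | h
  · simp [h, Nat.testBit_two_pow_of_ne (Nat.ne_of_gt h)]
  · subst h
    simp [Nat.testBit_two_pow_self, Nat.testBit_lt_two_pow hr]
  · have h1 : ¬ i < j := by omega
    have h2 : (1 : ℕ) < 2 ^ (i - j) := by
      have : 1 ≤ i - j := by omega
      calc (1:ℕ) < 2 ^ 1 := by norm_num
      _ ≤ 2 ^ (i - j) := Nat.pow_le_pow_right (by norm_num) this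
    have h3 : r < 2 ^ i := lt_of_lt_of_le hr (Nat.pow_le_pow_right (by norm_num) (le_of_lt h))
    simp [h1, Nat.testBit_two_pow_of_ne (Nat.ne_of_lt h), Nat.testBit_lt_two_pow h3,
      Nat.testBit_lt_two_pow h2]

lemma vf_empty (k : ℕ) : Vf k (∅ : Finset (Fin (2 * k))) = 0 := by
  rw [Vf_eq_fold, Finset.fold_empty]

lemma reach (k : ℕ) : ∀ x, x < 2 ^ k → ∃ μ : Finset (Fin (2 * k)), Vf k μ = x := by
  intro x
  induction x using Nat.strong_induction_on with
  | _ x ih =>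
    intro hx
    rcases Nat.eq_zero_or_pos x with h0 | h0
    · exact ⟨∅, by rw [vf_empty, h0]⟩
    · set j := x.log2 with hj
      have h1 : 2 ^ j ≤ x := Nat.log2_self_le (by omega)
      have h2 : x < 2 ^ (j + 1) := Nat.lt_log2_self
      have hjk : j < k := by
        by_contra hc
        push_neg at hc
        have := Nat.pow_le_pow_right (show 1 ≤ 2 by norm_num) hc
        omega
      have hjk2 : 2 ^ (j + 1) ≤ 2 ^ k := Nat.pow_le_pow_right (by norm_num) hjk
      set r := x - 2 ^ j with hrdef
      have hpos : 0 < 2 ^ j := Nat.two_pow_pos j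
      have hr : r < 2 ^ j := by rw [pow_succ] at h2; omega
      obtain ⟨μ, hμ⟩ := ih r (by omega) (by omega)
      obtain ⟨η1, hv1, _⟩ := Vf_flip k ⟨2 * j, by omega⟩ μ
      obtain ⟨η2, hv2, _⟩ := Vf_flip k ⟨2 * j + 1, by omega⟩ η1
      refine ⟨η2, ?_⟩
      have e1 : vi k ⟨2 * j, by omega⟩ = 2 ^ j - 1 := by
        show 2 ^ (2 * j / 2 + 2 * j % 2) - 1 = 2 ^ j - 1
        rw [show 2 * j / 2 + 2 * j % 2 = j from by omega]
      have e2 : vi k ⟨2 * j + 1, by omega⟩ = 2 ^ (j + 1) - 1 := by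
        show 2 ^ ((2 * j + 1) / 2 + (2 * j + 1) % 2) - 1 = 2 ^ (j + 1) - 1
        rw [show (2 * j + 1) / 2 + (2 * j + 1) % 2 = j + 1 from by omega]
      rw [hv2, hv1, hμ, e1, e2]
      have hx1 : 2 ^ (j + 1) - 1 = 2 ^ j ^^^ (2 ^ j - 1) := by
        rw [pow_add_eq_xor (by omega)]
        rw [pow_succ]
        omega
      rw [hx1, Nat.xor_assoc, ← Nat.xor_assoc (2 ^ j - 1), Nat.xor_self, Nat.zero_xor,
        pow_add_eq_xor hr]
      omega

-- congruence mod 2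
lemma red_eq_iff {x y : GaussianInt} :
    red x = red y ↔ 2 ∣ (x - y).re ∧ 2 ∣ (x - y).im := by
  rw [red, Ideal.Quotient.mk_eq_mk_iff_sub_mem, Ideal.mem_span_singleton,
    show (2 : GaussianInt) = ((2 : ℤ) : GaussianInt) by norm_cast, Zsqrtd.intCast_dvd]

lemma red_uset_eq {b : Bool} {x y : GaussianInt} (hx : x ∈ uset b) (hy : y ∈ uset b) :
    red x = red y := by
  rw [red_eq_iff]
  cases b <;>
    simp only [uset, if_true, if_false, Set.mem_insert_iff, Set.mem_singleton_iff] at hx hy <;>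
    rcases hx with hx | hx <;> rcases hy with hy | hy <;> subst hx <;> subst hy <;> constructor <;>
    decide

lemma red_uset_ne_zero {b : Bool} {x : GaussianInt} (hx : x ∈ uset b) : red x ≠ 0 := by
  intro h
  rw [show (0 : Rbar) = red 0 from (map_zero red).symm, red_eq_iff] at h
  cases b <;>
    simp only [uset, if_true, if_false, Set.mem_insert_iff, Set.mem_singleton_iff] at hx <;>
    rcases hx with hx | hx <;> subst hx <;> revert h <;> decide

lemma red_uset_ne {x y : GaussianInt} (hx : x ∈ uset true) (hy : y ∈ uset false) :
    red x ≠ red y := by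
  intro h
  rw [red_eq_iff] at h
  simp only [uset, if_true, if_false, Set.mem_insert_iff, Set.mem_singleton_iff] at hx hy
  rcases hx with hx | hx <;> rcases hy with hy | hy <;> subst hx <;> subst hy <;> revert h <;>
    decide

-- shape
def shapeMat (k : ℕ) (v : ℕ) : Matrix (Fin (2 ^ k)) (Fin (2 ^ k)) GaussianInt :=
  Matrix.of fun r c => if (c : ℕ) = (r : ℕ) ^^^ v then 1 else 0

lemma Sh_eq {k : ℕ} {v : ℕ} {b : Bool} {M : Matrix (Fin (2 ^ k)) (Fin (2 ^ k)) GaussianInt}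
    (hM : Mono v b M) : Sh M = shapeMat k v := by
  refine Matrix.ext fun r c => ?_
  by_cases h : (c : ℕ) = (r : ℕ) ^^^ v
  · have := uset_ne_zero ((hM r c).1 h)
    simp [Sh, shapeMat, h, this]
  · have := (hM r c).2 h
    simp [Sh, shapeMat, h, this]

lemma shapeMat_inj {k : ℕ} {v w : ℕ} (hv : v < 2 ^ k) (hw : w < 2 ^ k)
    (h : shapeMat k v = shapeMat k w) : v = w := by
  have h0 : (0 : ℕ) < 2 ^ k := Nat.two_pow_pos k
  have h1 := congrFun (congrFun h ⟨0, h0⟩) ⟨v, hv⟩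
  simp only [shapeMat, Matrix.of_apply, Nat.zero_xor, eq_self_iff_true, if_true] at h1
  by_cases h2 : v = w
  · exact h2
  · rw [if_neg h2] at h1
    exact absurd h1 one_ne_zero

lemma realType_iff {k : ℕ} {v : ℕ} {b : Bool} {M : Matrix (Fin (2 ^ k)) (Fin (2 ^ k)) GaussianInt}
    (hM : Mono v b M) (hv : v < 2 ^ k) : RealType M ↔ b = false := by
  constructor
  · intro hR
    by_contra hb
    have hb' : b = true := by cases b <;> simp_all
    subst hb'
    have h0 : (0 : ℕ) < 2 ^ k := Nat.two_pow_pos k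
    have hm := (hM ⟨0, h0⟩ ⟨v, hv⟩).1 (by simp [Nat.zero_xor])
    have hne := uset_ne_zero hm
    rcases hR ⟨0, h0⟩ ⟨v, hv⟩ hne with h | h <;>
      simp only [uset, if_true, Set.mem_insert_iff, Set.mem_singleton_iff] at hm <;>
      rcases hm with hm | hm <;> rw [h] at hm <;> revert hm <;> decide
  · intro hb
    subst hb
    intro r s hne
    have h : (s : ℕ) = (r : ℕ) ^^^ v := by
      by_contra hc
      exact hne ((hM r s).2 hc)
    have := (hM r s).1 h
    simpa [uset] using this

lemma imagType_of {k : ℕ} {v : ℕ} {M : Matrix (Fin (2 ^ k)) (Fin (2 ^ k)) GaussianInt}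
    (hM : Mono v true M) : ImagType M := by
  intro r s hne
  have h : (s : ℕ) = (r : ℕ) ^^^ v := by
    by_contra hc
    exact hne ((hM r s).2 hc)
  have := (hM r s).1 h
  simpa [uset] using this


/-- There are exactly `2^k` shapes among the `ρₖ(e_μ)`; the mod-`2ℤ[i]` reduction class of
`ρₖ(e_μ)` is determined exactly by the pair (shape, type), every `ρₖ(e_μ)` has a type
(real or imaginary), and every pair of a shape and a type is realized.  Hence the classes
of Clifford actions on the 2-torsion points biject with (shapes) × {real, imaginary}. -/
theorem shapes_and_types (k : ℕ) (hk : 1 ≤ k) :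
    Set.ncard {S : Matrix (Fin (2 ^ k)) (Fin (2 ^ k)) GaussianInt |
        ∃ μ : Finset (Fin (2 * k)), S = Sh (rho k μ)} = 2 ^ k ∧
    (∀ μ η : Finset (Fin (2 * k)),
      rhoBar k μ = rhoBar k η ↔
        (Sh (rho k μ) = Sh (rho k η) ∧ (RealType (rho k μ) ↔ RealType (rho k η)))) ∧
    (∀ μ : Finset (Fin (2 * k)), RealType (rho k μ) ∨ ImagType (rho k μ)) ∧
    (∀ μ : Finset (Fin (2 * k)), ∀ t : Bool, ∃ η : Finset (Fin (2 * k)),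
      Sh (rho k η) = Sh (rho k μ) ∧ (RealType (rho k η) ↔ t = true)) := by
  have hRT : ∀ μ : Finset (Fin (2 * k)), RealType (rho k μ) ↔ Bf k μ = false :=
    fun μ => realType_iff (mono_rho k μ) (Vf_lt k μ)
  have h0 : (0 : ℕ) < 2 ^ k := Nat.two_pow_pos k
  refine ⟨?_, ?_, ?_, ?_⟩
  · have hset : {S : Matrix (Fin (2 ^ k)) (Fin (2 ^ k)) GaussianInt |
        ∃ μ : Finset (Fin (2 * k)), S = Sh (rho k μ)} =
        Set.range (fun x : Fin (2 ^ k) => shapeMat k (x : ℕ)) := by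
      ext S
      simp only [Set.mem_setOf_eq, Set.mem_range]
      constructor
      · rintro ⟨μ, rfl⟩
        exact ⟨⟨Vf k μ, Vf_lt k μ⟩, (Sh_eq (mono_rho k μ)).symm⟩
      · rintro ⟨x, rfl⟩
        obtain ⟨μ, hμ⟩ := reach k x.val x.isLt
        exact ⟨μ, by rw [Sh_eq (mono_rho k μ), hμ]⟩
    rw [hset]
    have hinj : Function.Injective (fun x : Fin (2 ^ k) => shapeMat k (x : ℕ)) :=
      fun x y hxy => Fin.ext (shapeMat_inj x.isLt y.isLt hxy)
    rw [← Set.image_univ, Set.ncard_image_of_injective _ hinj, Set.ncard_univ,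
      Nat.card_eq_fintype_card, Fintype.card_fin]
  · intro μ η
    constructor
    · intro h
      set r0 : Fin (2 ^ k) := ⟨0, h0⟩ with hr0
      set c0 : Fin (2 ^ k) := ⟨Vf k μ, Vf_lt k μ⟩ with hc0def
      have hc0 : (c0 : ℕ) = (r0 : ℕ) ^^^ Vf k μ := by
        show Vf k μ = 0 ^^^ Vf k μ
        rw [Nat.zero_xor]
      have hu : rho k μ r0 c0 ∈ uset (Bf k μ) := (mono_rho k μ r0 c0).1 hc0
      have hent : red (rho k μ r0 c0) = red (rho k η r0 c0) := by
        have := Matrix.ext_iff.mpr h r0 c0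
        simpa only [rhoBar, Matrix.map_apply] using this
      have hne : rho k η r0 c0 ≠ 0 := by
        intro hzero
        rw [hzero, map_zero] at hent
        exact red_uset_ne_zero hu hent
      have hveq : Vf k μ = Vf k η := by
        by_contra hne2
        refine hne ((mono_rho k η r0 c0).2 ?_)
        show Vf k μ ≠ 0 ^^^ Vf k η
        rw [Nat.zero_xor]
        exact hne2
      have hu' : rho k η r0 c0 ∈ uset (Bf k η) :=
        (mono_rho k η r0 c0).1 (by rw [hc0, hveq])
      have hbeq : Bf k μ = Bf k η := by
        cases hBμ : Bf k μ <;> cases hBη : Bf k η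
        · rfl
        · rw [hBμ] at hu; rw [hBη] at hu'
          exact absurd hent.symm (red_uset_ne hu' hu)
        · rw [hBμ] at hu; rw [hBη] at hu'
          exact absurd hent (red_uset_ne hu hu')
        · rfl
      constructor
      · rw [Sh_eq (mono_rho k μ), Sh_eq (mono_rho k η), hveq]
      · rw [hRT μ, hRT η, hbeq]
    · rintro ⟨hsh, hreal⟩
      have hveq : Vf k μ = Vf k η :=
        shapeMat_inj (Vf_lt k μ) (Vf_lt k η)
          (by rw [← Sh_eq (mono_rho k μ), ← Sh_eq (mono_rho k η)]; exact hsh)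
      have hbeq : Bf k μ = Bf k η := by
        rw [hRT μ, hRT η] at hreal
        cases hBμ : Bf k μ <;> cases hBη : Bf k η <;> simp_all
      refine Matrix.ext fun r c => ?_
      show red (rho k μ r c) = red (rho k η r c)
      by_cases hcond : (c : ℕ) = (r : ℕ) ^^^ Vf k μ
      · exact red_uset_eq ((mono_rho k μ r c).1 hcond)
          (hbeq ▸ (mono_rho k η r c).1 (hveq ▸ hcond))
      · rw [(mono_rho k μ r c).2 hcond, (mono_rho k η r c).2 (hveq ▸ hcond)]
  · intro μ
    cases hb : Bf k μ with
    | false => exact Or.inl ((hRT μ).mpr hb)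
    | true => exact Or.inr (imagType_of (hb ▸ mono_rho k μ))
  · intro μ t
    have h0lt : 0 < 2 * k := by omega
    obtain ⟨η, hv, hbf⟩ := Vf_flip k ⟨0, h0lt⟩ μ
    have hvi0 : vi k ⟨0, h0lt⟩ = 0 := by
      show 2 ^ (0 / 2 + 0 % 2) - 1 = 0
      norm_num
    have hbi0 : bi k ⟨0, h0lt⟩ = true := by
      show decide (0 / 2 % 2 = 0) = true
      norm_num
    rw [hvi0, Nat.zero_xor] at hv
    rw [hbi0] at hbf
    by_cases hc : Bf k μ = !t
    · refine ⟨μ, rfl, ?_⟩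
      rw [hRT μ, hc]
      cases t <;> simp
    · refine ⟨η, ?_, ?_⟩
      · rw [Sh_eq (mono_rho k η), Sh_eq (mono_rho k μ), hv]
      · rw [hRT η, hbf]
        cases t <;> cases hBμ : Bf k μ <;> simp_all

end DiracSpinor
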